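/- arXiv:1911.05396 — 4 statements merged into one kernel-verified Lean document; each statement's English description precedes it below -/
import Mathlib

section
/- Let {V_k} be a sequence of real numbers and {ω_k} a sequence of nonnegative real numbers with ω_k = 0 for k < 0. Suppose there exist real numbers a ∈ (0,1), b ≥ 0, c ≥ 0 and a positive integer k₀ such that for all k ≥ 0, V_k ≥ (1/a) V_{k+1} + b ω_k − c Σ_{j=k−k₀}^{k} ω_j. If (c/(1−a)) · (1−a^{k₀+1})/a^{k₀} ≤ b, then V_k ≤ a^k V_0 for all k ≥ 0. -/
open scoped RealInnerProductSpace
open Filter Topology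

noncomputable section

/-- `L`-smoothness of a real-valued function, in the sense of assumption A1:
differentiability together with the two-sided quadratic bound. -/
def LSmooth {d : ℕ} (g : EuclideanSpace ℝ (Fin d) → ℝ) (L : ℝ) : Prop :=
  Differentiable ℝ g ∧
    ∀ x y : EuclideanSpace ℝ (Fin d),
      |g y - g x - ⟪gradient g x, y - x⟫| ≤ L / 2 * ‖y - x‖ ^ 2

/-- Assumption B1: `δ`-strong convexity in the weak sense (`δ` may be negative). -/
def WeakStrConvex {d : ℕ} (g : EuclideanSpace ℝ (Fin d) → ℝ) (δ : ℝ) : Prop :=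
  ∀ x y : EuclideanSpace ℝ (Fin d),
    g x + ⟪gradient g x, y - x⟫ + δ / 2 * ‖y - x‖ ^ 2 ≤ g y

/-- Properness of an `EReal`-valued function: finite somewhere and never `⊥`. -/
def EProper {d : ℕ} (g : EuclideanSpace ℝ (Fin d) → EReal) : Prop :=
  (∃ z, g z ≠ ⊤) ∧ ∀ z, g z ≠ ⊥

/-- Convexity of an `EReal`-valued function. -/
def EConvexFn {d : ℕ} (g : EuclideanSpace ℝ (Fin d) → EReal) : Prop :=
  ∀ z w : EuclideanSpace ℝ (Fin d), ∀ a b : ℝ, 0 ≤ a → 0 ≤ b → a + b = 1 →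
    g (a • z + b • w) ≤ (a : EReal) * g z + (b : EReal) * g w

/-- Assumption B2: `γ`-strong convexity of an `EReal`-valued function, stated via
subgradients: for every subgradient `v` of `g` at `z` one has the quadratic lower bound. -/
def EStrongConvexFn {d : ℕ} (g : EuclideanSpace ℝ (Fin d) → EReal) (γ : ℝ) : Prop :=
  ∀ z v : EuclideanSpace ℝ (Fin d),
    (∀ u, g z + ((⟪v, u - z⟫ : ℝ) : EReal) ≤ g u) →
      ∀ u, g z + ((⟪v, u - z⟫ + γ / 2 * ‖u - z‖ ^ 2 : ℝ) : EReal) ≤ g u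

/-- `p = Prox_g(z)`: `p` minimizes `u ↦ g u + ‖u - z‖² / 2`. -/
def IsProxPt {d : ℕ} (g : EuclideanSpace ℝ (Fin d) → EReal)
    (z p : EuclideanSpace ℝ (Fin d)) : Prop :=
  ∀ u, g p + ((‖p - z‖ ^ 2 / 2 : ℝ) : EReal) ≤ g u + ((‖u - z‖ ^ 2 / 2 : ℝ) : EReal)

/-- The Lagrangian `L(x, y) = f x + ⟪K x, y⟫ - h*(y)`, valued in `EReal`. -/
def Lagr {d₁ d₂ : ℕ} (f : EuclideanSpace ℝ (Fin d₁) → ℝ)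
    (hstar : EuclideanSpace ℝ (Fin d₂) → EReal)
    (K : EuclideanSpace ℝ (Fin d₁) →L[ℝ] EuclideanSpace ℝ (Fin d₂))
    (x : EuclideanSpace ℝ (Fin d₁)) (y : EuclideanSpace ℝ (Fin d₂)) : EReal :=
  (f x : EReal) + ((⟪K x, y⟫ : ℝ) : EReal) - hstar y

/-- `(xh, yh)` is a saddle point of `Lg`. -/
def IsSaddlePt {d₁ d₂ : ℕ}
    (Lg : EuclideanSpace ℝ (Fin d₁) → EuclideanSpace ℝ (Fin d₂) → EReal)
    (xh : EuclideanSpace ℝ (Fin d₁)) (yh : EuclideanSpace ℝ (Fin d₂)) : Prop :=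
  ∀ (x : EuclideanSpace ℝ (Fin d₁)) (y : EuclideanSpace ℝ (Fin d₂)),
    Lg xh y ≤ Lg xh yh ∧ Lg xh yh ≤ Lg x yh

/-! Rescaling by `a⁻¹ ^ k` turns the recursion into
`V N ≤ a ^ N * (V 0 + ∑ k < N, a⁻¹ ^ k * (c * S k - b * ω k))`, where `S k` is the window sum of
`ω` over `[k - k₀, k]`. Exchanging the order of summation, and using that `ω` vanishes at negative
indices, the weighted window sums are at most `(∑ i ≤ k₀, a⁻¹ ^ i) * ∑ m < N, a⁻¹ ^ m * ω m`.
The hypothesis on `b` is exactly `c * ∑ i ≤ k₀, a⁻¹ ^ i ≤ b`, so the perturbation is nonpositive. -/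

open Finset

theorem Int.sum_Icc_sub_eq_sum_range {M : Type*} [AddCommMonoid M] (f : ℤ → M) (k : ℤ) (n : ℕ) :
    ∑ j ∈ Icc (k - n) k, f j = ∑ i ∈ Finset.range (n + 1), f (k - i) := by
  rw [← sum_range_reflect, Int.Icc_eq_finset_map, sum_map,
    show (k + 1 - (k - n)).toNat = n + 1 by omega]
  refine sum_congr rfl fun i hi => ?_
  rw [mem_range] at hi
  simp only [Function.Embedding.trans_apply, Nat.castEmbedding_apply, addLeftEmbedding_apply]
  congr 1
  omega

theorem geom_sum_inv_eq_div {K : Type*} [Field K] {a : K} (ha0 : a ≠ 0) (ha1 : a ≠ 1) (n : ℕ) :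
    ∑ i ∈ range (n + 1), a⁻¹ ^ i = (1 - a ^ (n + 1)) / ((1 - a) * a ^ n) := by
  have : 1 - a ≠ 0 := sub_ne_zero.2 ha1.symm
  rw [geom_sum_inv ha1 ha0, inv_pow]
  field_simp
  ring

section WeightedWindow

variable {R : Type*} [CommSemiring R] [PartialOrder R] [IsOrderedRing R]
  {ω : ℤ → R} {r : R}

theorem sum_range_pow_mul_sub_le (hω : ∀ k, 0 ≤ ω k) (hωneg : ∀ k, k < 0 → ω k = 0)
    (hr : 0 ≤ r) (i N : ℕ) :
    ∑ k ∈ range N, r ^ k * ω (k - i) ≤ r ^ i * ∑ m ∈ range N, r ^ m * ω m :=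
  calc ∑ k ∈ range N, r ^ k * ω (k - i)
      ≤ ∑ k ∈ range (i + N), r ^ k * ω (k - i) :=
        sum_le_sum_of_subset_of_nonneg (range_subset_range.2 (by omega))
          fun k _ _ => mul_nonneg (pow_nonneg hr k) (hω _)
    _ = r ^ i * ∑ m ∈ range N, r ^ m * ω m := by
        rw [sum_range_add, sum_eq_zero fun k hk => ?_, zero_add, mul_sum]
        · refine sum_congr rfl fun m _ => ?_
          push_cast
          rw [add_sub_cancel_left, pow_add, mul_assoc]
        · rw [hωneg _ (by simp only [mem_range] at hk; omega), mul_zero]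

theorem sum_range_pow_mul_window_le (hω : ∀ k, 0 ≤ ω k) (hωneg : ∀ k, k < 0 → ω k = 0)
    (hr : 0 ≤ r) (n N : ℕ) :
    ∑ k ∈ range N, r ^ k * ∑ i ∈ range n, ω (k - i)
      ≤ (∑ i ∈ range n, r ^ i) * ∑ m ∈ range N, r ^ m * ω m :=
  calc ∑ k ∈ range N, r ^ k * ∑ i ∈ range n, ω (k - i)
      = ∑ i ∈ range n, ∑ k ∈ range N, r ^ k * ω (k - i) := by simp_rw [mul_sum]; exact sum_comm
    _ ≤ ∑ i ∈ range n, r ^ i * ∑ m ∈ range N, r ^ m * ω m :=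
        sum_le_sum fun i _ => sum_range_pow_mul_sub_le hω hωneg hr i N
    _ = (∑ i ∈ range n, r ^ i) * ∑ m ∈ range N, r ^ m * ω m := (sum_mul ..).symm

end WeightedWindow

theorem sum_range_pow_mul_window_sub_nonpos {R : Type*} [CommRing R] [PartialOrder R]
    [IsOrderedRing R] {ω : ℤ → R} {r b c : R} (hω : ∀ k, 0 ≤ ω k)
    (hωneg : ∀ k, k < 0 → ω k = 0) (hr : 0 ≤ r) (hc : 0 ≤ c) {n : ℕ}
    (hcb : c * ∑ i ∈ range n, r ^ i ≤ b) (N : ℕ) :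
    ∑ k ∈ range N, r ^ k * (c * ∑ i ∈ range n, ω (k - i) - b * ω k) ≤ 0 := by
  set A := ∑ m ∈ range N, r ^ m * ω m
  have hA : 0 ≤ A := sum_nonneg fun m _ => mul_nonneg (pow_nonneg hr m) (hω m)
  calc ∑ k ∈ range N, r ^ k * (c * ∑ i ∈ range n, ω (k - i) - b * ω k)
      = c * ∑ k ∈ range N, r ^ k * ∑ i ∈ range n, ω (k - i) - b * A := by
        rw [mul_sum, mul_sum, ← sum_sub_distrib]
        exact sum_congr rfl fun k _ => by ring
    _ ≤ c * ((∑ i ∈ range n, r ^ i) * A) - b * A := by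
        gcongr
        exact sum_range_pow_mul_window_le hω hωneg hr n N
    _ = (c * ∑ i ∈ range n, r ^ i - b) * A := by ring
    _ ≤ 0 := mul_nonpos_of_nonpos_of_nonneg (sub_nonpos.2 hcb) hA

theorem le_pow_mul_add_sum_of_le_mul_add {K : Type*} [Field K] [LinearOrder K]
    [IsStrictOrderedRing K] {a : K} (ha : 0 < a) {V e : ℕ → K}
    (h : ∀ k, V (k + 1) ≤ a * (V k + e k)) (N : ℕ) :
    V N ≤ a ^ N * (V 0 + ∑ k ∈ range N, a⁻¹ ^ k * e k) := by
  induction N with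
  | zero => simp
  | succ N ih =>
    calc V (N + 1) ≤ a * (V N + e N) := h N
      _ ≤ a * (a ^ N * (V 0 + ∑ k ∈ range N, a⁻¹ ^ k * e k) + e N) := by gcongr
      _ = a ^ (N + 1) * (V 0 + ∑ k ∈ range (N + 1), a⁻¹ ^ k * e k) := by
        rw [sum_range_succ, inv_pow]
        field_simp
        ring

theorem stmt_0_general (V : ℕ → ℝ) (ω : ℤ → ℝ) (a b c : ℝ) (k₀ : ℕ)
    (ha : a ∈ Set.Ioo (0 : ℝ) 1) (hc : 0 ≤ c)
    (hωpos : ∀ k : ℤ, 0 ≤ ω k) (hωneg : ∀ k : ℤ, k < 0 → ω k = 0)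
    (hrec : ∀ k : ℕ, V k ≥ (1 / a) * V (k + 1) + b * ω k
      - c * ∑ j ∈ Finset.Icc ((k : ℤ) - (k₀ : ℤ)) (k : ℤ), ω j)
    (hcond : c / (1 - a) * ((1 - a ^ (k₀ + 1)) / a ^ k₀) ≤ b) :
    ∀ k : ℕ, V k ≤ a ^ k * V 0 := by
  obtain ⟨ha0, ha1⟩ := ha
  have hstep (k : ℕ) : V (k + 1) ≤ a * (V k +
      (c * ∑ i ∈ range (k₀ + 1), ω (k - i) - b * ω k)) := by
    have := mul_le_mul_of_nonneg_left (hrec k) ha0.le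
    rw [Int.sum_Icc_sub_eq_sum_range] at this
    field_simp at this
    linarith
  have hgeom : c * ∑ i ∈ range (k₀ + 1), a⁻¹ ^ i ≤ b := by
    rw [geom_sum_inv_eq_div ha0.ne' ha1.ne]
    convert hcond using 1
    field_simp
  intro k
  calc V k ≤ a ^ k * (V 0 + ∑ j ∈ range k,
        a⁻¹ ^ j * (c * ∑ i ∈ range (k₀ + 1), ω (j - i) - b * ω j)) :=
        le_pow_mul_add_sum_of_le_mul_add ha0 hstep k
    _ ≤ a ^ k * V 0 := mul_le_mul_of_nonneg_left (add_le_of_nonpos_right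
        (sum_range_pow_mul_window_sub_nonpos hωpos hωneg (inv_nonneg.2 ha0.le) hc hgeom k))
        (pow_nonneg ha0.le k)

/-- Lemma 1: linear-rate recursion lemma (variant of Aytekin et al. without
nonnegativity of `V`). -/
theorem stmt_0 (V : ℕ → ℝ) (ω : ℤ → ℝ) (a b c : ℝ) (k₀ : ℕ)
    (ha : a ∈ Set.Ioo (0 : ℝ) 1) (hb : 0 ≤ b) (hc : 0 ≤ c) (hk₀ : 0 < k₀)
    (hωpos : ∀ k : ℤ, 0 ≤ ω k) (hωneg : ∀ k : ℤ, k < 0 → ω k = 0)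
    (hrec : ∀ k : ℕ, V k ≥ (1 / a) * V (k + 1) + b * ω k
      - c * ∑ j ∈ Finset.Icc ((k : ℤ) - (k₀ : ℤ)) (k : ℤ), ω j)
    (hcond : c / (1 - a) * ((1 - a ^ (k₀ + 1)) / a ^ k₀) ≤ b) :
    ∀ k : ℕ, V k ≤ a ^ k * V 0 :=
  stmt_0_general V ω a b c k₀ ha hc hωpos hωneg hrec hcond
end
end

section
/- Let f : ℝ^{d₁} → ℝ and h* : ℝ^{d₂} → (−∞,∞] be proper, closed, convex functions with f finite-valued, let K be a real d₂×d₁ matrix, and define the Lagrangian L(x,y) = f(x) + ⟨Kx, y⟩ − h*(y). For closed sets B₁ ⊂ ℝ^{d₁}, B₂ ⊂ ℝ^{d₂}, define the restricted primal-dual gap G_{B₁×B₂}(x,y) = sup_{y'∈B₂} L(x,y') − inf_{x'∈B₁} L(x',y). If (x,y) is an interior point of B₁ × B₂ and G_{B₁×B₂}(x,y) = 0, then (x,y) is a saddle point of L, i.e. L(x, y') ≤ L(x,y) ≤ L(x', y) for all x' ∈ ℝ^{d₁}, y' ∈ ℝ^{d₂}. -/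
/-!
A vanishing gap forces `sup_{B₂} L(x, ·) = L(x, y) = inf_{B₁} L(·, y)`, a finite value, so `h*(y)`
is finite. Hence `x` minimises the convex function `L(·, y)` on the neighbourhood `B₁` of `x`, and
`y` minimises the convex function `h* - ⟪K x, ·⟫` on the neighbourhood `B₂` of `y` relative to the
domain of `h*`. For convex functions local minima are global, which gives both saddle inequalities.
-/

open scoped RealInnerProductSpace
open Filter Topology

noncomputable section

-- In `EReal`, `⊤ - ⊤ = ⊥ - ⊥ = ⊥`, so a vanishing difference forces both terms to be finite.
theorem EReal.exists_coe_eq_of_sub_eq_zero {a b : EReal} (h : a - b = 0) :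
    ∃ r : ℝ, a = r ∧ b = r := by
  induction a using EReal.rec <;> induction b using EReal.rec <;> simp_all
  rw [← EReal.coe_sub, EReal.coe_eq_zero, sub_eq_zero] at h
  exact h.symm

section

variable {d d₁ d₂ : ℕ}

theorem EConvexFn.convexOn_toReal {g : EuclideanSpace ℝ (Fin d) → EReal} (hg : EConvexFn g)
    (hbot : ∀ z, g z ≠ ⊥) : ConvexOn ℝ {z | g z ≠ ⊤} (fun z => (g z).toReal) := by
  have key : ∀ z w : EuclideanSpace ℝ (Fin d), ∀ a b : ℝ, 0 ≤ a → 0 ≤ b → a + b = 1 →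
      g z ≠ ⊤ → g w ≠ ⊤ →
      g (a • z + b • w) ≤ ((a * (g z).toReal + b * (g w).toReal : ℝ) : EReal) := by
    intro z w a b ha hb hab hz hw
    have := hg z w a b ha hb hab
    rwa [← EReal.coe_toReal hz (hbot z), ← EReal.coe_toReal hw (hbot w), ← EReal.coe_mul,
      ← EReal.coe_mul, ← EReal.coe_add] at this
  refine ⟨fun z hz w hw a b ha hb hab => ?_, fun z hz w hw a b ha hb hab => ?_⟩
  · exact ne_top_of_le_ne_top (EReal.coe_ne_top _) (key z w a b ha hb hab hz hw)
  · simpa only [smul_eq_mul, EReal.toReal_coe] using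
      EReal.toReal_le_toReal (key z w a b ha hb hab hz hw) (hbot _) (EReal.coe_ne_top _)

variable {f : EuclideanSpace ℝ (Fin d₁) → ℝ} {hstar : EuclideanSpace ℝ (Fin d₂) → EReal}
  {K : EuclideanSpace ℝ (Fin d₁) →L[ℝ] EuclideanSpace ℝ (Fin d₂)}

theorem Lagr_eq_coe {x : EuclideanSpace ℝ (Fin d₁)} {y : EuclideanSpace ℝ (Fin d₂)}
    (htop : hstar y ≠ ⊤) (hbot : hstar y ≠ ⊥) :
    Lagr f hstar K x y = ((f x + ⟪K x, y⟫ - (hstar y).toReal : ℝ) : EReal) := by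
  rw [Lagr, ← EReal.coe_toReal htop hbot, EReal.toReal_coe, ← EReal.coe_add, ← EReal.coe_sub]

theorem Lagr_eq_bot {x : EuclideanSpace ℝ (Fin d₁)} {y : EuclideanSpace ℝ (Fin d₂)}
    (htop : hstar y = ⊤) : Lagr f hstar K x y = ⊥ := by
  rw [Lagr, htop, sub_eq_add_neg, EReal.neg_top, EReal.add_bot]

theorem Lagr_isMinOn_univ_of_mem_nhds (hf : ConvexOn ℝ Set.univ f)
    {B : Set (EuclideanSpace ℝ (Fin d₁))} {x : EuclideanSpace ℝ (Fin d₁)}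
    {y : EuclideanSpace ℝ (Fin d₂)} (htop : hstar y ≠ ⊤) (hbot : hstar y ≠ ⊥) (hB : B ∈ 𝓝 x)
    (hmin : IsMinOn (Lagr f hstar K · y) B x) : IsMinOn (Lagr f hstar K · y) Set.univ x := by
  simp only [IsMinOn, IsMinFilter, Lagr_eq_coe htop hbot, EReal.coe_le_coe_iff,
    Filter.eventually_principal] at hmin ⊢
  have hconv : ConvexOn ℝ Set.univ (fun x' => f x' + ⟪K x', y⟫) := by
    refine hf.add <| (((innerSL ℝ y).comp K).toLinearMap.convexOn convex_univ).congr ?_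
    intro x' _
    simp [real_inner_comm]
  intro x' _
  have := IsMinOn.of_isLocalMin_of_convex_univ
    (IsMinOn.isLocalMin (fun z hz => by simpa using hmin z hz) hB) hconv x'
  linarith

theorem Lagr_isMaxOn_univ_of_mem_nhds (hconv : EConvexFn hstar) (hbot : ∀ z, hstar z ≠ ⊥)
    {B : Set (EuclideanSpace ℝ (Fin d₂))} {x : EuclideanSpace ℝ (Fin d₁)}
    {y : EuclideanSpace ℝ (Fin d₂)} (htop : hstar y ≠ ⊤) (hB : B ∈ 𝓝 y)
    (hmax : IsMaxOn (Lagr f hstar K x ·) B y) : IsMaxOn (Lagr f hstar K x ·) Set.univ y := by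
  intro y' _
  by_cases hy' : hstar y' = ⊤
  · simp [Lagr_eq_bot hy']
  set D := {z | hstar z ≠ ⊤}
  set ψ := fun z => (hstar z).toReal - ⟪K x, z⟫
  have hψ : ConvexOn ℝ D ψ :=
    (hconv.convexOn_toReal hbot).sub ((innerSL ℝ (K x)).toLinearMap.concaveOn
      (hconv.convexOn_toReal hbot).1)
  have hloc : IsLocalMinOn ψ D y := by
    filter_upwards [inter_mem_nhdsWithin D hB, self_mem_nhdsWithin] with z hzB hzD
    have := hmax hzB.2
    simp only [Set.mem_ofPred_eq, Lagr_eq_coe hzD (hbot z), Lagr_eq_coe htop (hbot y),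
      EReal.coe_le_coe_iff] at this
    simp only [ψ]
    linarith
  have := IsMinOn.of_isLocalMinOn_of_convexOn htop hloc hψ hy'
  simp only [Set.mem_ofPred_eq, Lagr_eq_coe hy' (hbot y'), Lagr_eq_coe htop (hbot y),
    EReal.coe_le_coe_iff, ψ] at this ⊢
  linarith

end

theorem stmt_1_general (d₁ d₂ : ℕ)
    (f : EuclideanSpace ℝ (Fin d₁) → ℝ)
    (hfconv : ConvexOn ℝ Set.univ f)
    (hstar : EuclideanSpace ℝ (Fin d₂) → EReal)
    (hproper : EProper hstar) (hconvh : EConvexFn hstar)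
    (K : EuclideanSpace ℝ (Fin d₁) →L[ℝ] EuclideanSpace ℝ (Fin d₂))
    (B₁ : Set (EuclideanSpace ℝ (Fin d₁))) (B₂ : Set (EuclideanSpace ℝ (Fin d₂)))
    (x : EuclideanSpace ℝ (Fin d₁)) (y : EuclideanSpace ℝ (Fin d₂))
    (hint : (x, y) ∈ interior (B₁ ×ˢ B₂))
    (hgap : (⨆ y' ∈ B₂, Lagr f hstar K x y') - (⨅ x' ∈ B₁, Lagr f hstar K x' y) = 0) :
    IsSaddlePt (Lagr f hstar K) x y := by
  rw [interior_prod_eq] at hint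
  obtain ⟨hx, hy⟩ := hint
  obtain ⟨r, hsup, hinf⟩ := EReal.exists_coe_eq_of_sub_eq_zero hgap
  have hLsup : Lagr f hstar K x y ≤ r := hsup ▸ le_iSup₂_of_le y (interior_subset hy) le_rfl
  have hinfL : (r : EReal) ≤ Lagr f hstar K x y := hinf ▸ iInf₂_le x (interior_subset hx)
  have htop : hstar y ≠ ⊤ := fun h => EReal.coe_ne_bot r <|
    le_bot_iff.mp (hinfL.trans_eq (Lagr_eq_bot h))
  have hmin : IsMinOn (Lagr f hstar K · y) B₁ x := fun x' hx' =>
    hLsup.trans (hinf ▸ iInf₂_le x' hx' : (r : EReal) ≤ Lagr f hstar K x' y)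
  have hmax : IsMaxOn (Lagr f hstar K x ·) B₂ y := fun y' hy' =>
    (hsup ▸ le_iSup₂_of_le y' hy' le_rfl : Lagr f hstar K x y' ≤ r).trans hinfL
  intro x' y'
  exact ⟨Lagr_isMaxOn_univ_of_mem_nhds hconvh hproper.2 htop (mem_interior_iff_mem_nhds.mp hy)
      hmax (Set.mem_univ y'),
    Lagr_isMinOn_univ_of_mem_nhds hfconv htop (hproper.2 y) (mem_interior_iff_mem_nhds.mp hx)
      hmin (Set.mem_univ x')⟩

/-- If the restricted primal-dual gap vanishes at an interior point of `B₁ × B₂`,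
then that point is a saddle point of the Lagrangian. -/
theorem stmt_1 (d₁ d₂ : ℕ)
    (f : EuclideanSpace ℝ (Fin d₁) → ℝ)
    (hfconv : ConvexOn ℝ Set.univ f) (hflsc : LowerSemicontinuous f)
    (hstar : EuclideanSpace ℝ (Fin d₂) → EReal)
    (hproper : EProper hstar) (hlsc : LowerSemicontinuous hstar) (hconvh : EConvexFn hstar)
    (K : EuclideanSpace ℝ (Fin d₁) →L[ℝ] EuclideanSpace ℝ (Fin d₂))
    (B₁ : Set (EuclideanSpace ℝ (Fin d₁))) (B₂ : Set (EuclideanSpace ℝ (Fin d₂)))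
    (hB₁ : IsClosed B₁) (hB₂ : IsClosed B₂)
    (x : EuclideanSpace ℝ (Fin d₁)) (y : EuclideanSpace ℝ (Fin d₂))
    (hint : (x, y) ∈ interior (B₁ ×ˢ B₂))
    (hgap : (⨆ y' ∈ B₂, Lagr f hstar K x y') - (⨅ x' ∈ B₁, Lagr f hstar K x' y) = 0) :
    IsSaddlePt (Lagr f hstar K) x y :=
  stmt_1_general d₁ d₂ f hfconv hstar hproper hconvh K B₁ B₂ x y hint hgap
end
end

section
/- Let f_i : ℝ^{d₁} → ℝ (i = 1,…,N) be convex and L_i-smooth, set f = Σ_{i=1}^N f_i and L = Σ_{i=1}^N L_i. Let {x_j}_{j ≥ −T} be any sequence in ℝ^{d₁}, let k ≥ 0, and for each i let τ_k^i ∈ {0,1,…,T}. Then for every x ∈ ℝ^{d₁}, f(x) ≥ f(x_{k+1}) + ⟨Σ_{i=1}^N ∇f_i(x_{k−τ_k^i}), x − x_{k+1}⟩ − (L(T+1)/2) Σ_{j=k−T}^{k} ‖x_{j+1} − x_j‖². -/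
open scoped RealInnerProductSpace
open Filter Topology

noncomputable section

/-! At the delayed point `wᵢ = x (k - τᵢ)`, the convexity lower bound of `fᵢ` at `wᵢ` combined with
the smoothness upper bound between `wᵢ` and `x (k + 1)` gives
`fᵢ z ≥ fᵢ (x (k + 1)) + ⟪∇fᵢ wᵢ, z - x (k + 1)⟫ - Lᵢ / 2 * ‖x (k + 1) - wᵢ‖ ^ 2`.
Since `x (k + 1) - wᵢ` telescopes over at most `T + 1` consecutive steps, Cauchy–Schwarz bounds
its squared norm by `T + 1` times the sum of the last `T + 1` squared steps; summing over `i`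
gives the claim. -/

open Finset

theorem ConvexOn.add_inner_gradient_le {E : Type*} [NormedAddCommGroup E] [InnerProductSpace ℝ E]
    [CompleteSpace E] {g : E → ℝ} (hc : ConvexOn ℝ Set.univ g) {w : E}
    (hd : DifferentiableAt ℝ g w) (z : E) :
    g w + ⟪gradient g w, z - w⟫ ≤ g z := by
  set φ : ℝ → ℝ := g ∘ AffineMap.lineMap w z
  have hφ : ConvexOn ℝ Set.univ φ := hc.comp_affineMap (AffineMap.lineMap w z)
  have hg : HasFDerivAt g (InnerProductSpace.toDual ℝ E (gradient g w))
      (AffineMap.lineMap w z (0 : ℝ)) := by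
    simpa using hd.hasGradientAt.hasFDerivAt
  have hφ' : HasDerivAt φ ⟪gradient g w, z - w⟫ 0 :=
    hg.comp_hasDerivAt 0 AffineMap.hasDerivAt_lineMap
  have := hφ.le_slope_of_hasDerivAt (Set.mem_univ 0) (Set.mem_univ 1) zero_lt_one hφ'
  simp only [slope_def_field, φ, Function.comp_apply, AffineMap.lineMap_apply_zero,
    AffineMap.lineMap_apply_one, sub_zero, div_one] at this
  linarith

namespace LSmooth

variable {d : ℕ} {g : EuclideanSpace ℝ (Fin d) → ℝ} {L : ℝ}

theorem le_add_inner_gradient (hg : LSmooth g L) (w y : EuclideanSpace ℝ (Fin d)) :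
    g y ≤ g w + ⟪gradient g w, y - w⟫ + L / 2 * ‖y - w‖ ^ 2 := by
  linarith [(abs_le.mp (hg.2 w y)).2]

theorem nonneg [Nontrivial (EuclideanSpace ℝ (Fin d))] (hg : LSmooth g L) : 0 ≤ L := by
  obtain ⟨v, hv⟩ := exists_ne (0 : EuclideanSpace ℝ (Fin d))
  have h := (abs_nonneg _).trans (hg.2 0 v)
  rw [sub_zero] at h
  linarith [nonneg_of_mul_nonneg_left h (by positivity)]

theorem three_point_le (hg : LSmooth g L) (hc : ConvexOn ℝ Set.univ g)
    (w y z : EuclideanSpace ℝ (Fin d)) :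
    g y + ⟪gradient g w, z - y⟫ - L / 2 * ‖y - w‖ ^ 2 ≤ g z := by
  have hsplit : ⟪gradient g w, z - w⟫ = ⟪gradient g w, z - y⟫ + ⟪gradient g w, y - w⟫ := by
    rw [← inner_add_right, sub_add_sub_cancel]
  linarith [hc.add_inner_gradient_le (hg.1 w) z, hg.le_add_inner_gradient w y]

end LSmooth

theorem Finset.sum_Ico_sub_int {E : Type*} [AddCommGroup E] (x : ℤ → E) {a b : ℤ}
    (hab : a ≤ b) : ∑ j ∈ Ico a b, (x (j + 1) - x j) = x b - x a := by
  induction b, hab using Int.leInduction with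
  | base => simp
  | succ b hab ih =>
    rw [Ico_add_one_right_eq_Icc, ← Ico_insert_right hab, sum_insert right_notMem_Ico, ih]
    abel

theorem norm_sum_sq_le_card_mul {ι E : Type*} [SeminormedAddCommGroup E] (s : Finset ι)
    (v : ι → E) : ‖∑ i ∈ s, v i‖ ^ 2 ≤ #s * ∑ i ∈ s, ‖v i‖ ^ 2 :=
  (pow_le_pow_left₀ (norm_nonneg _) (norm_sum_le _ _) 2).trans sq_sum_le_card_mul_sum_sq

theorem norm_sub_sq_le_mul_sum_Ico {E : Type*} [SeminormedAddCommGroup E] (x : ℤ → E)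
    {a b : ℤ} (hab : a ≤ b) :
    ‖x b - x a‖ ^ 2 ≤ (b - a : ℤ) * ∑ j ∈ Ico a b, ‖x (j + 1) - x j‖ ^ 2 := by
  have hcard : ((#(Ico a b) : ℕ) : ℝ) = (b - a : ℤ) := by
    rw [Int.card_Ico, ← Int.cast_natCast, Int.toNat_of_nonneg (sub_nonneg.mpr hab)]
  rw [← hcard, ← Finset.sum_Ico_sub_int x hab]
  exact norm_sum_sq_le_card_mul _ _

theorem norm_sub_sq_le_mul_sum_Icc_of_delay {E : Type*} [SeminormedAddCommGroup E]
    (x : ℤ → E) (k : ℤ) {τ T : ℕ} (hτ : τ ≤ T) :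
    ‖x (k + 1) - x (k - τ)‖ ^ 2 ≤ (T + 1) * ∑ j ∈ Icc (k - T) k, ‖x (j + 1) - x j‖ ^ 2 := by
  have hlen : ((k + 1 - (k - τ) : ℤ) : ℝ) ≤ T + 1 := by
    push_cast
    linarith [(Nat.cast_le (α := ℝ)).mpr hτ]
  have hsub : Ico (k - τ) (k + 1) ⊆ Icc (k - T) k := by
    intro j; simp only [mem_Ico, mem_Icc]; omega
  calc ‖x (k + 1) - x (k - τ)‖ ^ 2
      ≤ ((k + 1 - (k - τ) : ℤ) : ℝ) * ∑ j ∈ Ico (k - τ) (k + 1), ‖x (j + 1) - x j‖ ^ 2 :=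
        norm_sub_sq_le_mul_sum_Ico x (by omega)
    _ ≤ (T + 1) * ∑ j ∈ Icc (k - T) k, ‖x (j + 1) - x j‖ ^ 2 :=
        mul_le_mul hlen (sum_le_sum_of_subset_of_nonneg hsub fun _ _ _ ↦ by positivity)
          (by positivity) (by positivity)

theorem stmt_2_general (d₁ N T : ℕ)
    (f : Fin N → EuclideanSpace ℝ (Fin d₁) → ℝ) (Lc : Fin N → ℝ)
    (hconv : ∀ i, ConvexOn ℝ Set.univ (f i))
    (hsmooth : ∀ i, LSmooth (f i) (Lc i))
    (x : ℤ → EuclideanSpace ℝ (Fin d₁)) (k : ℤ)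
    (τk : Fin N → ℕ) (hτk : ∀ i, τk i ≤ T) :
    ∀ z : EuclideanSpace ℝ (Fin d₁),
      (∑ i, f i z) ≥ (∑ i, f i (x (k + 1)))
        + ⟪∑ i, gradient (f i) (x (k - (τk i : ℤ))), z - x (k + 1)⟫
        - (∑ i, Lc i) * ((T : ℝ) + 1) / 2 * ∑ j ∈ Finset.Icc (k - (T : ℤ)) k, ‖x (j + 1) - x j‖ ^ 2 := by
  intro z
  rcases subsingleton_or_nontrivial (EuclideanSpace ℝ (Fin d₁)) with hE | hE
  · have hsteps : ∀ j, x (j + 1) - x j = 0 := fun _ ↦ Subsingleton.elim _ _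
    simp [Subsingleton.elim z (x (k + 1)), hsteps]
  set S := ∑ j ∈ Icc (k - (T : ℤ)) k, ‖x (j + 1) - x j‖ ^ 2
  have hcomponent : ∀ i, f i (x (k + 1)) + ⟪gradient (f i) (x (k - τk i)), z - x (k + 1)⟫
      - Lc i / 2 * ((T + 1) * S) ≤ f i z := fun i ↦ by
    have hdelay := norm_sub_sq_le_mul_sum_Icc_of_delay x k (hτk i)
    have hL : 0 ≤ Lc i / 2 := by linarith [(hsmooth i).nonneg]
    linarith [(hsmooth i).three_point_le (hconv i) (x (k - τk i)) (x (k + 1)) z,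
      mul_le_mul_of_nonneg_left hdelay hL]
  calc (∑ i, f i (x (k + 1))) + ⟪∑ i, gradient (f i) (x (k - τk i)), z - x (k + 1)⟫
        - (∑ i, Lc i) * (T + 1) / 2 * S
      = ∑ i, (f i (x (k + 1)) + ⟪gradient (f i) (x (k - τk i)), z - x (k + 1)⟫
          - Lc i / 2 * ((T + 1) * S)) := by
        rw [sum_sub_distrib, sum_add_distrib, sum_inner, ← sum_mul, ← sum_div]; ring
    _ ≤ ∑ i, f i z := sum_le_sum fun i _ ↦ hcomponent i

/-- Delayed descent inequality for a sum of convex smooth components. -/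
theorem stmt_2 (d₁ N T : ℕ)
    (f : Fin N → EuclideanSpace ℝ (Fin d₁) → ℝ) (Lc : Fin N → ℝ)
    (hconv : ∀ i, ConvexOn ℝ Set.univ (f i))
    (hsmooth : ∀ i, LSmooth (f i) (Lc i))
    (x : ℤ → EuclideanSpace ℝ (Fin d₁)) (k : ℤ) (hk : 0 ≤ k)
    (τk : Fin N → ℕ) (hτk : ∀ i, τk i ≤ T) :
    ∀ z : EuclideanSpace ℝ (Fin d₁),
      (∑ i, f i z) ≥ (∑ i, f i (x (k + 1)))
        + ⟪∑ i, gradient (f i) (x (k - (τk i : ℤ))), z - x (k + 1)⟫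
        - (∑ i, Lc i) * ((T : ℝ) + 1) / 2 * ∑ j ∈ Finset.Icc (k - (T : ℤ)) k, ‖x (j + 1) - x j‖ ^ 2 :=
  stmt_2_general d₁ N T f Lc hconv hsmooth x k τk hτk
end
end

section
/- Let f_i : ℝ^{d₁} → ℝ (i = 1,…,N) be convex and L_i-smooth with f = Σ f_i, L = Σ L_i; let h* : ℝ^{d₂} → (−∞,∞] be proper, closed, convex; let K be a d₂×d₁ real matrix and L(x,y) = f(x) + ⟨Kx,y⟩ − h*(y). Let σ, τ > 0 and let {(x_k, y_k)} be generated by the extrapolated PD-PIAG iteration: g_k = Σ_i ∇f_i(x_{k−τ_k^i}) with delays τ_k^i ∈ {0,…,T}, x_{k+1} = x_k − σ g_k − σ Kᵀ(2y_k − y_{k−1}), y_{k+1} = Prox_{τ h*}(y_k + τ K x_{k+1}). Then for every k ≥ 0 and every (x,y) ∈ ℝ^{d₁}×ℝ^{d₂}: ‖x − x_k‖²/(2σ) + ‖y − y_k‖²/(2τ) ≥ L(x_{k+1}, y) − L(x, y_{k+1}) + ‖x − x_{k+1}‖²/(2σ) + ‖y − y_{k+1}‖²/(2τ) + (1 − √(τσ)‖K‖)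 ‖x_k − x_{k+1}‖²/(2σ) + ‖y_k − y_{k+1}‖²/(2τ) − √(τσ)‖K‖ ‖y_{k−1} − y_k‖²/(2τ) − ⟨Kᵀ(y_{k+1} − y_k), x_{k+1} − x⟩ + ⟨Kᵀ(y_k − y_{k−1}), x_k − x⟩ − (L(T+1)/2) Σ_{j=k−T}^{k} ‖x_{j+1} − x_j‖². -/
/-!
The estimate is the sum of a primal and a dual one-step bound. On the primal side, `f_i` is
bounded above at `x_{k+1}` by its quadratic model at the stale point `x_{k-τ_k^i}` and below at
`x` by its tangent there, so the delay costs `L_i/2 ‖x_{k+1} - x_{k-τ_k^i}‖²`; telescoping and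
Cauchy–Schwarz bound this by `L_i (T+1)/2 Σ_{j=k-T}^{k} ‖x_{j+1} - x_j‖²`, and the update rule turns
`⟪g_k + Kᵀ(2y_k - y_{k-1}), x_{k+1} - x⟫` into a difference of squared distances. On the dual
side, `y_{k+1}` minimizes a `1`-strongly convex function, which gives the three-point inequality
of the proximal map. In the sum the coupling terms collapse to `⟪Kᵀ(y_k - y_{k-1}), x_k - x_{k+1}⟫`,
and Young's inequality with weights `√τ`, `√σ` bounds it by
`√(τσ) ‖K‖ (‖x_k - x_{k+1}‖²/(2σ) + ‖y_{k-1} - y_k‖²/(2τ))`.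
-/

open scoped RealInnerProductSpace
open Filter Topology

noncomputable section

open Finset

theorem le_of_forall_mem_Ioo_le_add_mul {a b c : ℝ} (h : ∀ t ∈ Set.Ioo (0 : ℝ) 1, a ≤ c + t * b) :
    a ≤ c :=
  ge_of_tendsto ((Continuous.tendsto' (by fun_prop) 0 c (by simp)).mono_left nhdsWithin_le_nhds)
    (Filter.mem_of_superset (Ioo_mem_nhdsGT one_pos) h)

theorem mul_le_sqrt_mul_mul_add {σ τ : ℝ} (hσ : 0 < σ) (hτ : 0 < τ) (a b : ℝ) :
    a * b ≤ Real.sqrt (τ * σ) * (b ^ 2 / (2 * σ) + a ^ 2 / (2 * τ)) := by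
  set s := Real.sqrt (τ * σ)
  have hs : s ^ 2 = τ * σ := Real.sq_sqrt (by positivity)
  have hs0 : 0 ≤ s := Real.sqrt_nonneg _
  rw [div_add_div _ _ (by positivity) (by positivity), mul_div_assoc', le_div_iff₀ (by positivity),
    ← sub_nonneg, ← mul_nonneg_iff_of_pos_left hτ]
  have key : τ * (s * (b ^ 2 * (2 * τ) + 2 * σ * a ^ 2) - a * b * (2 * σ * (2 * τ)))
      = 2 * s * (τ * b - s * a) ^ 2 := by
    linear_combination (4 * τ * a * b - 2 * s * a ^ 2) * hs
  rw [key]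
  positivity

theorem norm_sub_sq_le_mul_sum_norm_sub_sq {E : Type*} [SeminormedAddCommGroup E]
    (v : ℤ → E) (k : ℤ) (d : ℕ) :
    ‖v (k + 1) - v (k - d)‖ ^ 2 ≤ (d + 1) * ∑ j ∈ Icc (k - d) k, ‖v (j + 1) - v j‖ ^ 2 := by
  have hcard : #(Icc (k - d) k) = d + 1 := by
    rw [Int.card_Icc]; omega
  have htel : ∑ j ∈ Icc (k - d) k, (v (j + 1) - v j) = v (k + 1) - v (k - d) := by
    rw [Int.Icc_eq_finset_map, sum_map, show (k + 1 - (k - d)).toNat = d + 1 by omega]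
    convert sum_range_sub (fun n : ℕ => v (k - d + n)) (d + 1) using 2 <;> simp <;> ring_nf
  calc ‖v (k + 1) - v (k - d)‖ ^ 2
      ≤ (∑ j ∈ Icc (k - d) k, ‖v (j + 1) - v j‖) ^ 2 := by
        rw [← htel]; gcongr; exact norm_sum_le _ _
    _ ≤ _ := by
        have := sq_sum_le_card_mul_sum_sq (s := Icc (k - d) k) (f := fun j => ‖v (j + 1) - v j‖)
        rwa [hcard, Nat.cast_add, Nat.cast_one] at this

section InnerProductSpace

variable {E F : Type*} [NormedAddCommGroup E] [InnerProductSpace ℝ E] [NormedAddCommGroup F]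
  [InnerProductSpace ℝ F]

theorem norm_smul_add_smul_sub_sq (p u z : E) (t : ℝ) :
    ‖(1 - t) • p + t • u - z‖ ^ 2
      = (1 - t) * ‖p - z‖ ^ 2 + t * ‖u - z‖ ^ 2 - t * (1 - t) * ‖u - p‖ ^ 2 := by
  rw [show (1 - t) • p + t • u - z = (p - z) + t • (u - p) by module,
    show u - z = (p - z) + (u - p) by abel, norm_add_sq_real, norm_add_sq_real, norm_smul,
    real_inner_smul_right, mul_pow, Real.norm_eq_abs, sq_abs]
  ring

theorem inner_sub_eq_of_eq_sub_smul {σ : ℝ} (hσ : σ ≠ 0) {x₁ x₂ v : E} (h : x₂ = x₁ - σ • v)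
    (u : E) :
    ⟪v, x₂ - u⟫ = (‖u - x₁‖ ^ 2 - ‖x₁ - x₂‖ ^ 2 - ‖u - x₂‖ ^ 2) / (2 * σ) := by
  have hv : v = σ⁻¹ • (x₁ - x₂) := by
    rw [h, sub_sub_cancel, smul_smul, inv_mul_cancel₀ hσ, one_smul]
  rw [show u - x₁ = (u - x₂) - (x₁ - x₂) by abel, norm_sub_sq_real, hv, real_inner_smul_left,
    ← neg_sub u x₂, inner_neg_right, real_inner_comm]
  field_simp
  ring

theorem sub_le_inner_of_prox_three_point {τ a b : ℝ} (hτ : 0 < τ) {y₁ y₂ y w : F}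
    (h : τ * a + ‖y₂ - (y₁ + τ • w)‖ ^ 2 / 2 + ‖y - y₂‖ ^ 2 / 2
      ≤ τ * b + ‖y - (y₁ + τ • w)‖ ^ 2 / 2) :
    a - b ≤ ⟪w, y₂ - y⟫ + (‖y - y₁‖ ^ 2 - ‖y - y₂‖ ^ 2 - ‖y₁ - y₂‖ ^ 2) / (2 * τ) := by
  rw [show y₂ - (y₁ + τ • w) = (y₂ - y₁) - τ • w by abel,
    show y - (y₁ + τ • w) = (y - y₁) - τ • w by abel,
    norm_sub_sq_real (y₂ - y₁), norm_sub_sq_real (y - y₁), real_inner_smul_right,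
    real_inner_smul_right] at h
  have hw : ⟪w, y₂ - y⟫ = ⟪y₂ - y₁, w⟫ - ⟪y - y₁, w⟫ := by
    rw [real_inner_comm, ← inner_sub_left, sub_sub_sub_cancel_right]
  rw [hw, norm_sub_rev y₁ y₂, ← mul_le_mul_iff_right₀ hτ]
  field_simp
  linarith

theorem ConvexOn.add_inner_gradient_le_s4 [CompleteSpace E] {g : E → ℝ}
    (hg : ConvexOn ℝ Set.univ g) {x : E} (hgx : DifferentiableAt ℝ g x) (u : E) :
    g x + ⟪gradient g x, u - x⟫ ≤ g u := by
  let ℓ : ℝ →ᵃ[ℝ] E := AffineMap.lineMap x u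
  have hline : HasDerivAt (g ∘ ℓ) ⟪gradient g x, u - x⟫ 0 := by
    have h := hgx.hasGradientAt.hasFDerivAt.comp_hasDerivAt_of_eq (0 : ℝ)
      (AffineMap.hasDerivAt_lineMap (a := x) (b := u)) (by simp)
    simpa using h
  have hslope := (hg.comp_affineMap ℓ).le_slope_of_hasDerivAt
    (Set.mem_univ 0) (Set.mem_univ 1) zero_lt_one hline
  rw [slope_def_field] at hslope
  simp only [Function.comp, ℓ, AffineMap.lineMap_apply_zero, AffineMap.lineMap_apply_one,
    sub_zero, div_one] at hslope
  linarith

theorem ContinuousLinearMap.inner_adjoint_le [CompleteSpace E] [CompleteSpace F] (K : E →L[ℝ] F)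
    {σ τ : ℝ} (hσ : 0 < σ) (hτ : 0 < τ) (a : F) (b : E) :
    ⟪K.adjoint a, b⟫ ≤ Real.sqrt (τ * σ) * ‖K‖ * (‖b‖ ^ 2 / (2 * σ) + ‖a‖ ^ 2 / (2 * τ)) :=
  calc ⟪K.adjoint a, b⟫ = ⟪a, K b⟫ := ContinuousLinearMap.adjoint_inner_left K b a
    _ ≤ ‖a‖ * ‖K b‖ := real_inner_le_norm _ _
    _ ≤ ‖a‖ * (‖K‖ * ‖b‖) := by gcongr; exact K.le_opNorm b
    _ ≤ ‖K‖ * (Real.sqrt (τ * σ) * (‖b‖ ^ 2 / (2 * σ) + ‖a‖ ^ 2 / (2 * τ))) := by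
        rw [mul_left_comm]
        exact mul_le_mul_of_nonneg_left (mul_le_sqrt_mul_mul_add hσ hτ _ _) (norm_nonneg K)
    _ = _ := by ring

theorem primal_dual_step_estimate [CompleteSpace E] [CompleteSpace F] (K : E →L[ℝ] F)
    {σ τ : ℝ} (hσ : 0 < σ) (hτ : 0 < τ) {x₁ x₂ x g : E} {y₀ y₁ y₂ y : F}
    {Fx₂ Fx Hy₂ Hy err : ℝ}
    (hF : Fx₂ - Fx ≤ ⟪g, x₂ - x⟫ + err)
    (hx₂ : x₂ = x₁ - σ • g - σ • K.adjoint ((2 : ℝ) • y₁ - y₀))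
    (hy₂ : τ * Hy₂ + ‖y₂ - (y₁ + τ • K x₂)‖ ^ 2 / 2 + ‖y - y₂‖ ^ 2 / 2
      ≤ τ * Hy + ‖y - (y₁ + τ • K x₂)‖ ^ 2 / 2) :
    Fx₂ + ⟪K x₂, y⟫ - Hy - (Fx + ⟪K x, y₂⟫ - Hy₂)
        + (‖x - x₂‖ ^ 2 / (2 * σ) + ‖y - y₂‖ ^ 2 / (2 * τ)
          + (1 - Real.sqrt (τ * σ) * ‖K‖) * (‖x₁ - x₂‖ ^ 2 / (2 * σ))
          + ‖y₁ - y₂‖ ^ 2 / (2 * τ)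
          - Real.sqrt (τ * σ) * ‖K‖ * (‖y₀ - y₁‖ ^ 2 / (2 * τ))
          - ⟪K.adjoint (y₂ - y₁), x₂ - x⟫ + ⟪K.adjoint (y₁ - y₀), x₁ - x⟫ - err)
      ≤ ‖x - x₁‖ ^ 2 / (2 * σ) + ‖y - y₁‖ ^ 2 / (2 * τ) := by
  have hprimal := inner_sub_eq_of_eq_sub_smul hσ.ne' (x₁ := x₁) (x₂ := x₂)
    (v := g + K.adjoint ((2 : ℝ) • y₁ - y₀)) (by rw [hx₂, smul_add, sub_sub]) x
  have hdual := sub_le_inner_of_prox_three_point hτ hy₂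
  have hcross := K.inner_adjoint_le hσ hτ (y₁ - y₀) (x₁ - x₂)
  have hcoupling : ⟪K x₂, y⟫ - ⟪K x, y₂⟫ + ⟪K x₂, y₂ - y⟫ - ⟪K.adjoint ((2 : ℝ) • y₁ - y₀), x₂ - x⟫
      - ⟪K.adjoint (y₂ - y₁), x₂ - x⟫ + ⟪K.adjoint (y₁ - y₀), x₁ - x⟫
      = ⟪K.adjoint (y₁ - y₀), x₁ - x₂⟫ := by
    simp only [ContinuousLinearMap.adjoint_inner_left, map_sub, inner_sub_left, inner_sub_right,
      real_inner_smul_right, real_inner_comm (K _)]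
    ring
  rw [inner_add_left] at hprimal
  rw [norm_sub_rev y₁ y₀] at hcross
  linear_combination hF + hdual + hcross + hprimal + hcoupling

end InnerProductSpace

section EuclideanSpace

variable {d : ℕ}

theorem LSmooth.le_add_inner_add {g : EuclideanSpace ℝ (Fin d) → ℝ} {L : ℝ}
    (hg : LSmooth g L) (x u : EuclideanSpace ℝ (Fin d)) :
    g u ≤ g x + ⟪gradient g x, u - x⟫ + L / 2 * ‖u - x‖ ^ 2 := by
  linarith [(abs_le.1 (hg.2 x u)).2]

theorem LSmooth.mul_norm_sq_nonneg {g : EuclideanSpace ℝ (Fin d) → ℝ} {L : ℝ}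
    (hg : LSmooth g L) (v : EuclideanSpace ℝ (Fin d)) : 0 ≤ L * ‖v‖ ^ 2 := by
  have := (abs_nonneg _).trans (hg.2 0 v)
  rw [sub_zero] at this
  linarith

theorem LSmooth.sub_le_inner_add {g : EuclideanSpace ℝ (Fin d) → ℝ} {L : ℝ}
    (hconv : ConvexOn ℝ Set.univ g) (hg : LSmooth g L) (u v w : EuclideanSpace ℝ (Fin d)) :
    g u - g w ≤ ⟪gradient g v, u - w⟫ + L / 2 * ‖u - v‖ ^ 2 := by
  have hsplit : ⟪gradient g v, u - w⟫ = ⟪gradient g v, u - v⟫ - ⟪gradient g v, w - v⟫ := by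
    rw [← inner_sub_right, sub_sub_sub_cancel_right]
  linarith [hg.le_add_inner_add v u, hconv.add_inner_gradient_le_s4 (hg.1 v) w]

theorem sum_sub_le_inner_sum_delayed_gradient {N T : ℕ}
    {f : Fin N → EuclideanSpace ℝ (Fin d) → ℝ} {Lc : Fin N → ℝ}
    (hconv : ∀ i, ConvexOn ℝ Set.univ (f i)) (hsmooth : ∀ i, LSmooth (f i) (Lc i))
    (x : ℤ → EuclideanSpace ℝ (Fin d)) (k : ℤ) (dly : Fin N → ℕ) (hdly : ∀ i, dly i ≤ T)
    (u : EuclideanSpace ℝ (Fin d)) :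
    ∑ i, f i (x (k + 1)) - ∑ i, f i u
      ≤ ⟪∑ i, gradient (f i) (x (k - dly i)), x (k + 1) - u⟫
        + (∑ i, Lc i) * ((T : ℝ) + 1) / 2 * ∑ j ∈ Icc (k - T) k, ‖x (j + 1) - x j‖ ^ 2 := by
  set S := ∑ j ∈ Icc (k - T) k, ‖x (j + 1) - x j‖ ^ 2
  have hwindow : ∀ i, ‖x (k + 1) - x (k - dly i)‖ ^ 2 ≤ (T + 1) * S := fun i =>
    calc ‖x (k + 1) - x (k - dly i)‖ ^ 2
        ≤ (dly i + 1) * ∑ j ∈ Icc (k - dly i) k, ‖x (j + 1) - x j‖ ^ 2 :=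
          norm_sub_sq_le_mul_sum_norm_sub_sq x k (dly i)
      _ ≤ (T + 1) * S := by
          gcongr
          · exact hdly i
          · exact sum_le_sum_of_subset_of_nonneg
              (Icc_subset_Icc_left (by have := hdly i; omega)) fun _ _ _ => by positivity
  have hterm : ∀ i, f i (x (k + 1)) - f i u
      ≤ ⟪gradient (f i) (x (k - dly i)), x (k + 1) - u⟫ + Lc i / 2 * ((T + 1) * S) := by
    intro i
    have hdelay : Lc i / 2 * ‖x (k + 1) - x (k - dly i)‖ ^ 2 ≤ Lc i / 2 * ((T + 1) * S) := by
      rcases le_or_gt 0 (Lc i) with hL | hL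
      · gcongr; exact hwindow i
      · -- for `Lc i < 0`, smoothness forces all the norms involved, hence both sides, to vanish
        have hS : 0 ≤ Lc i * S :=
          mul_sum (Icc (k - T) k) _ (Lc i) ▸ sum_nonneg fun j _ => (hsmooth i).mul_norm_sq_nonneg _
        nlinarith [(hsmooth i).mul_norm_sq_nonneg (x (k + 1) - x (k - dly i))]
    linarith [(hsmooth i).sub_le_inner_add (hconv i) (x (k + 1)) (x (k - dly i)) u]
  calc ∑ i, f i (x (k + 1)) - ∑ i, f i u
      = ∑ i, (f i (x (k + 1)) - f i u) := (sum_sub_distrib _ _).symm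
    _ ≤ ∑ i, (⟪gradient (f i) (x (k - dly i)), x (k + 1) - u⟫ + Lc i / 2 * ((T + 1) * S)) :=
        sum_le_sum fun i _ => hterm i
    _ = _ := by
        rw [sum_add_distrib, ← sum_inner, ← sum_mul, ← sum_div]
        ring

theorem EProper.exists_eq_coe {h : EuclideanSpace ℝ (Fin d) → EReal} (hh : EProper h)
    {z : EuclideanSpace ℝ (Fin d)} (hz : h z ≠ ⊤) : ∃ r : ℝ, h z = r :=
  ⟨(h z).toReal, (EReal.coe_toReal hz (hh.2 z)).symm⟩

theorem IsProxPt.ne_top {h : EuclideanSpace ℝ (Fin d) → EReal} (hh : EProper h)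
    {τ : ℝ} (hτ : 0 < τ) {z p : EuclideanSpace ℝ (Fin d)}
    (hp : IsProxPt (fun u => (τ : EReal) * h u) z p) : h p ≠ ⊤ := by
  intro htop
  obtain ⟨z₀, hz₀⟩ := hh.1
  obtain ⟨r, hr⟩ := hh.exists_eq_coe hz₀
  have := hp z₀
  simp only [htop, hr, EReal.coe_mul_top_of_pos hτ, EReal.top_add_coe, ← EReal.coe_mul,
    ← EReal.coe_add, top_le_iff, EReal.coe_ne_top] at this

theorem IsProxPt.three_point {h : EuclideanSpace ℝ (Fin d) → EReal} (hh : EProper h)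
    (hconv : EConvexFn h) {τ : ℝ} (hτ : 0 < τ) {z p : EuclideanSpace ℝ (Fin d)}
    (hp : IsProxPt (fun u => (τ : EReal) * h u) z p) {a : ℝ} (ha : h p = a)
    (u : EuclideanSpace ℝ (Fin d)) {b : ℝ} (hb : h u = b) :
    τ * a + ‖p - z‖ ^ 2 / 2 + ‖u - p‖ ^ 2 / 2 ≤ τ * b + ‖u - z‖ ^ 2 / 2 := by
  -- compare `p` with the points `(1 - t) • p + t • u` of the segment and let `t → 0`
  refine le_of_forall_mem_Ioo_le_add_mul (b := ‖u - p‖ ^ 2 / 2) fun t ⟨ht₀, ht₁⟩ => ?_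
  have hw : h ((1 - t) • p + t • u) ≤ (((1 - t) * a + t * b : ℝ) : EReal) := by
    have := hconv p u (1 - t) t (by linarith) ht₀.le (by ring)
    rwa [ha, hb, ← EReal.coe_mul, ← EReal.coe_mul, ← EReal.coe_add] at this
  obtain ⟨c, hc⟩ := hh.exists_eq_coe (ne_top_of_le_ne_top (EReal.coe_ne_top _) hw)
  rw [hc, EReal.coe_le_coe_iff] at hw
  have hmin := hp ((1 - t) • p + t • u)
  simp only [ha, hc, ← EReal.coe_mul, ← EReal.coe_add, EReal.coe_le_coe_iff,
    norm_smul_add_smul_sub_sq] at hmin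
  have hτw := mul_le_mul_of_nonneg_left hw hτ.le
  refine le_of_mul_le_mul_left ?_ ht₀
  linarith

end EuclideanSpace

theorem stmt_4_general
    (d₁ d₂ N T : ℕ)
    (f : Fin N → EuclideanSpace ℝ (Fin d₁) → ℝ) (Lc : Fin N → ℝ)
    (hconv : ∀ i, ConvexOn ℝ Set.univ (f i))
    (hsmooth : ∀ i, LSmooth (f i) (Lc i))
    (hstar : EuclideanSpace ℝ (Fin d₂) → EReal)
    (hproper : EProper hstar) (hconvh : EConvexFn hstar)
    (K : EuclideanSpace ℝ (Fin d₁) →L[ℝ] EuclideanSpace ℝ (Fin d₂))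
    (σ τ : ℝ) (hσ : 0 < σ) (hτ : 0 < τ)
    (x : ℤ → EuclideanSpace ℝ (Fin d₁)) (y : ℤ → EuclideanSpace ℝ (Fin d₂))
    (dly : ℤ → Fin N → ℕ) (hdly : ∀ (k : ℤ) (i : Fin N), dly k i ≤ T)
    (hxiter : ∀ k : ℤ, 0 ≤ k →
      x (k + 1) = x k - σ • (∑ i, gradient (f i) (x (k - (dly k i : ℤ))))
        - σ • (ContinuousLinearMap.adjoint K) ((2 : ℝ) • y k - y (k - 1)))
    (hyiter : ∀ k : ℤ, 0 ≤ k →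
      IsProxPt (fun u => (τ : EReal) * hstar u) (y k + τ • K (x (k + 1))) (y (k + 1)))
 :
    ∀ k : ℤ, 0 ≤ k → ∀ (xp : EuclideanSpace ℝ (Fin d₁)) (yp : EuclideanSpace ℝ (Fin d₂)),
      Lagr (fun z => ∑ i, f i z) hstar K (x (k + 1)) yp - Lagr (fun z => ∑ i, f i z) hstar K xp (y (k + 1))
        + ((‖xp - x (k + 1)‖ ^ 2 / (2 * σ) + ‖yp - y (k + 1)‖ ^ 2 / (2 * τ)
            + (1 - Real.sqrt (τ * σ) * ‖K‖) * (‖x k - x (k + 1)‖ ^ 2 / (2 * σ))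
            + ‖y k - y (k + 1)‖ ^ 2 / (2 * τ)
            - Real.sqrt (τ * σ) * ‖K‖ * (‖y (k - 1) - y k‖ ^ 2 / (2 * τ))
            - ⟪(ContinuousLinearMap.adjoint K) (y (k + 1) - y k), x (k + 1) - xp⟫
            + ⟪(ContinuousLinearMap.adjoint K) (y k - y (k - 1)), x k - xp⟫
            - (∑ i, Lc i) * ((T : ℝ) + 1) / 2
              * ∑ j ∈ Finset.Icc (k - (T : ℤ)) k, ‖x (j + 1) - x j‖ ^ 2 : ℝ) : EReal)
        ≤ ((‖xp - x k‖ ^ 2 / (2 * σ) + ‖yp - y k‖ ^ 2 / (2 * τ) : ℝ) : EReal) := by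
  intro k hk xp yp
  have hprox := hyiter k hk
  obtain ⟨h₂, hh₂⟩ := hproper.exists_eq_coe (hprox.ne_top hproper hτ)
  rcases eq_or_ne (hstar yp) ⊤ with hyp | hyp
  · simp [Lagr, hyp]
  obtain ⟨hp, hhp⟩ := hproper.exists_eq_coe hyp
  simp only [Lagr, hhp, hh₂, ← EReal.coe_add, ← EReal.coe_sub, EReal.coe_le_coe_iff]
  exact primal_dual_step_estimate K hσ hτ
    (sum_sub_le_inner_sum_delayed_gradient hconv hsmooth x k (dly k) (hdly k) xp) (hxiter k hk)
    (hprox.three_point hproper hconvh hτ hh₂ yp hhp)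

/-- One-step estimate for the extrapolated PD-PIAG iteration
(`ȳ = 2 y_k - y_(k-1)`), inequality (20) in the paper. -/
theorem stmt_4
    (d₁ d₂ N T : ℕ)
    (f : Fin N → EuclideanSpace ℝ (Fin d₁) → ℝ) (Lc : Fin N → ℝ)
    (hconv : ∀ i, ConvexOn ℝ Set.univ (f i))
    (hsmooth : ∀ i, LSmooth (f i) (Lc i))
    (hstar : EuclideanSpace ℝ (Fin d₂) → EReal)
    (hproper : EProper hstar) (hlsc : LowerSemicontinuous hstar) (hconvh : EConvexFn hstar)
    (K : EuclideanSpace ℝ (Fin d₁) →L[ℝ] EuclideanSpace ℝ (Fin d₂))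
    (σ τ : ℝ) (hσ : 0 < σ) (hτ : 0 < τ)
    (x : ℤ → EuclideanSpace ℝ (Fin d₁)) (y : ℤ → EuclideanSpace ℝ (Fin d₂))
    (hx0 : ∀ k : ℤ, k ≤ 0 → x k = x 0) (hy0 : ∀ k : ℤ, k ≤ 0 → y k = y 0)
    (dly : ℤ → Fin N → ℕ) (hdly : ∀ (k : ℤ) (i : Fin N), dly k i ≤ T)
    (hxiter : ∀ k : ℤ, 0 ≤ k →
      x (k + 1) = x k - σ • (∑ i, gradient (f i) (x (k - (dly k i : ℤ))))
        - σ • (ContinuousLinearMap.adjoint K) ((2 : ℝ) • y k - y (k - 1)))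
    (hyiter : ∀ k : ℤ, 0 ≤ k →
      IsProxPt (fun u => (τ : EReal) * hstar u) (y k + τ • K (x (k + 1))) (y (k + 1)))
 :
    ∀ k : ℤ, 0 ≤ k → ∀ (xp : EuclideanSpace ℝ (Fin d₁)) (yp : EuclideanSpace ℝ (Fin d₂)),
      Lagr (fun z => ∑ i, f i z) hstar K (x (k + 1)) yp - Lagr (fun z => ∑ i, f i z) hstar K xp (y (k + 1))
        + ((‖xp - x (k + 1)‖ ^ 2 / (2 * σ) + ‖yp - y (k + 1)‖ ^ 2 / (2 * τ)
            + (1 - Real.sqrt (τ * σ) * ‖K‖) * (‖x k - x (k + 1)‖ ^ 2 / (2 * σ))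
            + ‖y k - y (k + 1)‖ ^ 2 / (2 * τ)
            - Real.sqrt (τ * σ) * ‖K‖ * (‖y (k - 1) - y k‖ ^ 2 / (2 * τ))
            - ⟪(ContinuousLinearMap.adjoint K) (y (k + 1) - y k), x (k + 1) - xp⟫
            + ⟪(ContinuousLinearMap.adjoint K) (y k - y (k - 1)), x k - xp⟫
            - (∑ i, Lc i) * ((T : ℝ) + 1) / 2
              * ∑ j ∈ Finset.Icc (k - (T : ℤ)) k, ‖x (j + 1) - x j‖ ^ 2 : ℝ) : EReal)
        ≤ ((‖xp - x k‖ ^ 2 / (2 * σ) + ‖yp - y k‖ ^ 2 / (2 * τ) : ℝ) : EReal) :=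
  stmt_4_general d₁ d₂ N T f Lc hconv hsmooth hstar hproper hconvh K σ τ hσ hτ x y dly hdly hxiter
    hyiter

end
end
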